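/- For any minimal subgraph M⊂ℤⁿ, the n-skeleton Mⁿ is nonempty, and there exists a constant c₁ depending only on n such that every vertex x∈M satisfies d(x, Mⁿ) ≤ c₁, where d is the combinatorial graph distance. -/

import Mathlib

open Set

/-- Vertices of the integer lattice `ℤⁿ`. -/
abbrev Vtx (n : ℕ) := Fin n → ℤ

/-- Adjacency in the integer lattice: Euclidean (equivalently ℓ¹) distance one. -/
def ZAdj {n : ℕ} (x y : Vtx n) : Prop := (∑ i, (x i - y i).natAbs) = 1

/-- Exterior vertex boundary. -/
def extB {n : ℕ} (Ω : Set (Vtx n)) : Set (Vtx n) := {z | z ∉ Ω ∧ ∃ w ∈ Ω, ZAdj z w}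

/-- Closure `Ω̄ = Ω ∪ τΩ`. -/
def clos {n : ℕ} (Ω : Set (Vtx n)) : Set (Vtx n) := Ω ∪ extB Ω

/-- Directed version of `E_Ω = E(Ω, Ω̄)`. -/
def dirE {n : ℕ} (Ω : Set (Vtx n)) : Set (Vtx n × Vtx n) :=
  {p | ZAdj p.1 p.2 ∧ p.1 ∈ clos Ω ∧ p.2 ∈ clos Ω ∧ (p.1 ∈ Ω ∨ p.2 ∈ Ω)}

/-- Directed edge boundary of `F`; each undirected boundary edge is counted once. -/
def dirBdry {n : ℕ} (F : Set (Vtx n)) : Set (Vtx n × Vtx n) :=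
  {p | ZAdj p.1 p.2 ∧ p.1 ∈ F ∧ p.2 ∉ F}

/-- `M ⊆ ℤⁿ` is a minimal (area-minimizing) subgraph. -/
def IsMinimal {n : ℕ} (M : Set (Vtx n)) : Prop :=
  ∀ Ω : Set (Vtx n), Ω.Finite → ∀ F : Set (Vtx n), symmDiff F M ⊆ Ω →
    (dirBdry M ∩ dirE Ω).ncard ≤ (dirBdry F ∩ dirE Ω).ncard

/-- Vertex boundary `δM`. -/
def vB {n : ℕ} (M : Set (Vtx n)) : Set (Vtx n) := {x | x ∈ M ∧ ∃ y, y ∉ M ∧ ZAdj x y}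

/-- Degree of `x` in the subgraph induced on `M`. -/
noncomputable def degIn {n : ℕ} (M : Set (Vtx n)) (x : Vtx n) : ℕ :=
  ({y | y ∈ M ∧ ZAdj x y}).ncard

/-- Combinatorial (graph) distance in `ℤⁿ`, which equals the ℓ¹ distance. -/
def latDist {n : ℕ} (x y : Vtx n) : ℕ := ∑ i, (x i - y i).natAbs

/-- The ∞-normed ball `B̂_r(x)`. -/
def Bhat {n : ℕ} (x : Vtx n) (r : ℕ) : Set (Vtx n) := {y | ∀ i, (y i - x i).natAbs ≤ r}

/-- The set of vertices of `M` lying in some unit `n`-cube all of whose vertices are in `M`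
(the vertices of the `n`-skeleton `Mⁿ`). -/
def skel {n : ℕ} (M : Set (Vtx n)) : Set (Vtx n) :=
  {x | x ∈ M ∧ ∃ v : Vtx n, (∀ i, x i = v i ∨ x i = v i + 1) ∧
    ∀ y : Vtx n, (∀ i, y i = v i ∨ y i = v i + 1) → y ∈ M}

lemma zadj_coord {n : ℕ} {x y : Vtx n} (h : ZAdj x y) (i : Fin n) : (x i - y i).natAbs ≤ 1 := by
  rw [ZAdj] at h
  calc (x i - y i).natAbs ≤ ∑ j, (x j - y j).natAbs := by
        simpa using Finset.single_le_sum (f := fun j => (x j - y j).natAbs)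
          (fun j _ => Nat.zero_le _) (Finset.mem_univ i)
    _ = 1 := h

lemma zadj_symm {n : ℕ} {x y : Vtx n} (h : ZAdj x y) : ZAdj y x := by
  rw [ZAdj] at h ⊢
  rw [← h]
  exact Finset.sum_congr rfl fun i _ => by omega

/-- structure of a neighbor -/
lemma zadj_structure {n : ℕ} {p q : Vtx n} (h : ZAdj p q) :
    ∃ i, q = Function.update p i (p i + 1) ∨ q = Function.update p i (p i - 1) := by
  rw [ZAdj] at h
  have h1 : ∃ i, (p i - q i).natAbs = 1 := by
    by_contra hc
    push_neg at hc
    have : ∀ i ∈ Finset.univ, (p i - q i).natAbs = 0 := by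
      intro i _
      have h2 : (p i - q i).natAbs ≤ ∑ j, (p j - q j).natAbs := by
        simpa using Finset.single_le_sum (f := fun j => (p j - q j).natAbs)
          (fun j _ => Nat.zero_le _) (Finset.mem_univ i)
      have := hc i; omega
    rw [Finset.sum_eq_zero this] at h
    omega
  obtain ⟨i, hi⟩ := h1
  have hrest : ∀ j, j ≠ i → (p j - q j).natAbs = 0 := by
    intro j hj
    have : ∑ k ∈ Finset.univ.erase i, (p k - q k).natAbs = 0 := by
      have h3 : (p i - q i).natAbs + ∑ k ∈ Finset.univ.erase i, (p k - q k).natAbs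
          = ∑ k, (p k - q k).natAbs := by
        simpa using Finset.add_sum_erase Finset.univ (fun k => (p k - q k).natAbs)
          (Finset.mem_univ i)
      omega
    have := Finset.sum_eq_zero_iff.mp this j (Finset.mem_erase.mpr ⟨hj, Finset.mem_univ j⟩)
    exact this
  refine ⟨i, ?_⟩
  have hq : ∀ j, j ≠ i → q j = p j := fun j hj => by have := hrest j hj; omega
  rcases Int.natAbs_eq_iff.mp hi with h' | h'
  · right
    funext j
    by_cases hji : j = i
    · subst hji; rw [Function.update_self]; omega
    · rw [Function.update_of_ne hji]; exact hq j hji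
  · left
    funext j
    by_cases hji : j = i
    · subst hji; rw [Function.update_self]; omega
    · rw [Function.update_of_ne hji]; exact hq j hji

/-- finite box Finset containing Bhat -/
noncomputable def boxF {n : ℕ} (x : Vtx n) (r : ℕ) : Finset (Vtx n) :=
  Fintype.piFinset (fun i => Finset.Icc (x i - r) (x i + r))

lemma bhat_subset_boxF {n : ℕ} (x : Vtx n) (r : ℕ) : Bhat x r ⊆ ↑(boxF x r) := by
  intro y hy
  simp only [boxF, Finset.coe_sort_coe, Finset.mem_coe, Fintype.mem_piFinset, Finset.mem_Icc]
  intro i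
  have := hy i
  omega

lemma boxF_card {n : ℕ} (x : Vtx n) (r : ℕ) : (boxF x r).card = (2*r+1)^n := by
  rw [boxF, Fintype.card_piFinset]
  have : ∀ i : Fin n, (Finset.Icc (x i - r) (x i + r)).card = 2*r+1 := by
    intro i
    rw [Int.card_Icc]
    omega
  simp [this]

lemma bhat_finite {n : ℕ} (x : Vtx n) (r : ℕ) : (Bhat x r).Finite :=
  Set.Finite.subset (Finset.finite_toSet _) (bhat_subset_boxF x r)

lemma bhat_ncard_le {n : ℕ} (x : Vtx n) (r : ℕ) : (Bhat x r).ncard ≤ (2*r+1)^n := by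
  have := Set.ncard_le_ncard (bhat_subset_boxF x r) (Finset.finite_toSet _)
  rwa [Set.ncard_coe_finset, boxF_card] at this

lemma bhat_mono {n : ℕ} (x : Vtx n) {r s : ℕ} (h : r ≤ s) : Bhat x r ⊆ Bhat x s := by
  intro y hy i
  exact le_trans (hy i) h

lemma zadj_bhat {n : ℕ} {x p q : Vtx n} {r : ℕ} (hp : p ∈ Bhat x r) (h : ZAdj p q) :
    q ∈ Bhat x (r+1) := by
  intro i
  have h1 := zadj_coord h i
  have h2 := hp i
  omega

/-- generic fiber-counting lemma -/
lemma ncard_le_mul_of_fibers {α β : Type*} (s : Set α) (t : Set β) (f : α → β)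
    (k : ℕ) (hs : s.Finite) (ht : t.Finite) (hmap : ∀ a ∈ s, f a ∈ t)
    (hfib : ∀ b, ({a ∈ s | f a = b}).ncard ≤ k) : s.ncard ≤ k * t.ncard := by
  classical
  have hmap' : ∀ a ∈ hs.toFinset, f a ∈ ht.toFinset := by
    intro a ha
    simp only [Set.Finite.mem_toFinset] at *
    exact hmap a ha
  have key := Finset.card_le_mul_card_image_of_maps_to hmap' k ?_
  · rwa [Set.ncard_eq_toFinset_card s hs, Set.ncard_eq_toFinset_card t ht]
  · intro b _
    have hfin : ({a ∈ s | f a = b} : Set α).Finite := hs.subset (fun a ha => ha.1)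
    have heq : ({a ∈ hs.toFinset | f a = b} : Finset α) = hfin.toFinset := by
      ext a
      simp only [Finset.mem_filter, Set.Finite.mem_toFinset, Set.mem_setOf_eq]
    rw [heq, ← Set.ncard_eq_toFinset_card _ hfin]
    exact hfib b

/-- path-in-cube lemma -/
lemma cube_path {n : ℕ} {M : Set (Vtx n)} {p : Vtx n} (hp : p ∈ M) :
    ∀ d : ℕ, ∀ z : Vtx n, (∑ i, (z i - p i).natAbs) = d →
      (∀ i, z i = p i ∨ z i = p i + 1) → z ∉ M →
      ∃ a b : Vtx n, ZAdj a b ∧ a ∈ M ∧ b ∉ M ∧ (∀ i, a i = p i ∨ a i = p i + 1) := by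
  intro d
  induction d using Nat.strong_induction_on with
  | _ d ih =>
    intro z hd hcube hz
    have hne : z ≠ p := fun h => hz (h ▸ hp)
    have : ∃ i, z i ≠ p i := by
      by_contra hc
      push_neg at hc
      exact hne (funext hc)
    obtain ⟨i, hi⟩ := this
    have hzi : z i = p i + 1 := (hcube i).resolve_left hi
    set z' := Function.update z i (p i) with hz'
    have hz'cube : ∀ j, z' j = p j ∨ z' j = p j + 1 := by
      intro j
      by_cases hji : j = i
      · subst hji; left; simp [hz']
      · simp only [hz', Function.update_of_ne hji]; exact hcube j
    have hadj : ZAdj z' z := by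
      rw [ZAdj]
      have : ∀ j, (z' j - z j).natAbs = if j = i then 1 else 0 := by
        intro j
        by_cases hji : j = i
        · subst hji; simp [hz', hzi]
        · simp [hz', Function.update_of_ne hji, hji]
      simp [this]
    have hdist : (∑ j, (z' j - p j).natAbs) = d - 1 ∧ 1 ≤ d := by
      have hterm : ∀ j, (z' j - p j).natAbs
          = if j = i then 0 else (z j - p j).natAbs := by
        intro j
        by_cases hji : j = i
        · subst hji; simp [hz']
        · simp [hz', Function.update_of_ne hji, hji]
      have hsplit : (∑ j, (z j - p j).natAbs)
          = (z i - p i).natAbs + ∑ j ∈ Finset.univ.erase i, (z j - p j).natAbs := by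
        simpa using (Finset.add_sum_erase Finset.univ (fun j => (z j - p j).natAbs)
          (Finset.mem_univ i)).symm
      have hsplit' : (∑ j, (z' j - p j).natAbs)
          = (z' i - p i).natAbs + ∑ j ∈ Finset.univ.erase i, (z' j - p j).natAbs := by
        simpa using (Finset.add_sum_erase Finset.univ (fun j => (z' j - p j).natAbs)
          (Finset.mem_univ i)).symm
      have he : ∑ j ∈ Finset.univ.erase i, (z' j - p j).natAbs
          = ∑ j ∈ Finset.univ.erase i, (z j - p j).natAbs := by
        refine Finset.sum_congr rfl fun j hj => ?_
        rw [hterm j, if_neg (Finset.mem_erase.mp hj).1]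
      have h1 : (z i - p i).natAbs = 1 := by rw [hzi]; simp
      have h0 : (z' i - p i).natAbs = 0 := by simp [hz']
      constructor
      · omega
      · omega
    by_cases hz'M : z' ∈ M
    · exact ⟨z', z, hadj, hz'M, hz, hz'cube⟩
    · exact ih (d-1) (by omega) z' hdist.1 hz'cube hz'M

/-- edge from a non-skeleton point of M -/
lemma edge_of_not_skel {n : ℕ} {M : Set (Vtx n)} {p : Vtx n} (hp : p ∈ M) (hs : p ∉ skel M) :
    ∃ a b : Vtx n, ZAdj a b ∧ a ∈ M ∧ b ∉ M ∧ (∀ i, a i = p i ∨ a i = p i + 1) := by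
  have : ∃ z : Vtx n, (∀ i, z i = p i ∨ z i = p i + 1) ∧ z ∉ M := by
    by_contra hc
    push_neg at hc
    exact hs ⟨hp, p, fun i => Or.inl rfl, fun y hy => hc y hy⟩
  obtain ⟨z, hzc, hzM⟩ := this
  exact cube_path hp _ z rfl hzc hzM

lemma extB_finite {n : ℕ} {Ω : Set (Vtx n)} (h : Ω.Finite) : (extB Ω).Finite := by
  have hsub : extB Ω ⊆ ⋃ w ∈ Ω, Bhat w 1 := by
    rintro z ⟨-, w, hw, hzw⟩
    exact Set.mem_biUnion hw (fun i => zadj_coord hzw i)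
  exact Set.Finite.subset (Set.Finite.biUnion h (fun w _ => bhat_finite w 1)) hsub

lemma clos_finite {n : ℕ} {Ω : Set (Vtx n)} (h : Ω.Finite) : (clos Ω).Finite :=
  Set.Finite.union h (extB_finite h)

lemma dirE_finite {n : ℕ} {Ω : Set (Vtx n)} (h : Ω.Finite) : (dirE Ω).Finite := by
  have hsub : dirE Ω ⊆ (clos Ω) ×ˢ (clos Ω) := by
    rintro ⟨a, b⟩ ⟨-, h1, h2, -⟩
    exact ⟨h1, h2⟩
  exact Set.Finite.subset (Set.Finite.prod (clos_finite h) (clos_finite h)) hsub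

/-- boundary edges of `M` based in the ball -/
def edgesA {n : ℕ} (M : Set (Vtx n)) (x : Vtx n) (r : ℕ) : Set (Vtx n × Vtx n) :=
  {e | ZAdj e.1 e.2 ∧ e.1 ∈ M ∧ e.1 ∈ Bhat x r ∧ e.2 ∉ M}

/-- edges of `M` crossing the sphere inward -/
def edgesS {n : ℕ} (M : Set (Vtx n)) (x : Vtx n) (r : ℕ) : Set (Vtx n × Vtx n) :=
  {e | ZAdj e.1 e.2 ∧ e.1 ∈ M ∧ e.1 ∉ Bhat x r ∧ e.2 ∈ M ∧ e.2 ∈ Bhat x r}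

lemma edgesS_finite {n : ℕ} (M : Set (Vtx n)) (x : Vtx n) (r : ℕ) : (edgesS M x r).Finite := by
  have hsub : edgesS M x r ⊆ (Bhat x (r+1)) ×ˢ (Bhat x r) := by
    rintro ⟨a, b⟩ ⟨hadj, -, -, -, hb⟩
    exact ⟨zadj_bhat hb (zadj_symm hadj), hb⟩
  exact Set.Finite.subset (Set.Finite.prod (bhat_finite _ _) (bhat_finite _ _)) hsub

/-- the key inequality from minimality with competitor `F = M \ B̂_r(x)` -/
lemma key_ineq {n : ℕ} {M : Set (Vtx n)} (hmin : IsMinimal M) (x : Vtx n) (r : ℕ) :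
    (edgesA M x r).ncard ≤ (edgesS M x r).ncard := by
  classical
  set Ω : Set (Vtx n) := Bhat x (r+2) with hΩ
  have hΩfin : Ω.Finite := bhat_finite x (r+2)
  set F : Set (Vtx n) := M \ Bhat x r with hF
  have hsymm : symmDiff F M ⊆ Ω := by
    intro z hz
    rw [Set.mem_symmDiff] at hz
    rcases hz with ⟨hzF, hzM⟩ | ⟨hzM, hzF⟩
    · exact absurd hzF.1 hzM
    · have : z ∈ Bhat x r := by
        by_contra hc
        exact hzF ⟨hzM, hc⟩
      exact bhat_mono x (by omega) this
  have hmin' := hmin Ω hΩfin F hsymm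
  set C : Set (Vtx n × Vtx n) := (dirBdry M ∩ dirE Ω) ∩ {e | e.1 ∉ Bhat x r} with hC
  -- A ∪ C ⊆ dirBdry M ∩ dirE Ω, disjointly
  have hAsub : edgesA M x r ⊆ dirBdry M ∩ dirE Ω := by
    rintro ⟨a, b⟩ ⟨hadj, haM, haB, hbM⟩
    have haΩ : a ∈ Ω := bhat_mono x (by omega) haB
    have hbΩ : b ∈ Ω := by
      have := zadj_bhat haB hadj
      exact bhat_mono x (by omega) this
    exact ⟨⟨hadj, haM, hbM⟩, hadj, Or.inl haΩ, Or.inl hbΩ, Or.inl haΩ⟩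
  have hdisj : Disjoint (edgesA M x r) C := by
    rw [Set.disjoint_left]
    rintro ⟨a, b⟩ ⟨-, -, haB, -⟩ ⟨-, hnB⟩
    exact hnB haB
  have hMfin : (dirBdry M ∩ dirE Ω).Finite :=
    (dirE_finite hΩfin).subset (Set.inter_subset_right)
  have hCfin : C.Finite := hMfin.subset Set.inter_subset_left
  have hAfin : (edgesA M x r).Finite := hMfin.subset hAsub
  have hUnion : edgesA M x r ∪ C ⊆ dirBdry M ∩ dirE Ω :=
    Set.union_subset hAsub Set.inter_subset_left
  have h1 : (edgesA M x r).ncard + C.ncard ≤ (dirBdry M ∩ dirE Ω).ncard := by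
    rw [← Set.ncard_union_eq hdisj hAfin hCfin]
    exact Set.ncard_le_ncard hUnion hMfin
  -- dirBdry F ∩ dirE Ω ⊆ C ∪ S
  have h2 : dirBdry F ∩ dirE Ω ⊆ C ∪ edgesS M x r := by
    rintro ⟨a, b⟩ ⟨⟨hadj, haF, hbF⟩, hE⟩
    have haM : a ∈ M := haF.1
    have haB : a ∉ Bhat x r := haF.2
    by_cases hbM : b ∈ M
    · right
      have hbB : b ∈ Bhat x r := by
        by_contra hc
        exact hbF ⟨hbM, hc⟩
      exact ⟨hadj, haM, haB, hbM, hbB⟩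
    · left
      exact ⟨⟨⟨hadj, haM, hbM⟩, hE⟩, haB⟩
  have h3 : (dirBdry F ∩ dirE Ω).ncard ≤ C.ncard + (edgesS M x r).ncard :=
    le_trans (Set.ncard_le_ncard h2 ((hCfin.union (edgesS_finite M x r))))
      (Set.ncard_union_le _ _)
  omega

/-- counting the crossing edges by their outer endpoint -/
lemma edgesS_card_le {n : ℕ} (M : Set (Vtx n)) (x : Vtx n) (r : ℕ) :
    (edgesS M x r).ncard ≤ 2*n * ((M ∩ Bhat x (r+1)) \ (M ∩ Bhat x r)).ncard := by
  classical
  set shell := (M ∩ Bhat x (r+1)) \ (M ∩ Bhat x r) with hshell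
  have hshellfin : shell.Finite :=
    ((bhat_finite x (r+1)).subset (Set.inter_subset_right)).subset Set.diff_subset
  refine ncard_le_mul_of_fibers _ _ Prod.fst (2*n) (edgesS_finite M x r) hshellfin ?_ ?_
  · rintro ⟨a, b⟩ ⟨hadj, haM, haB, hbM, hbB⟩
    exact ⟨⟨haM, zadj_bhat hbB (zadj_symm hadj)⟩, fun hc => haB hc.2⟩
  · intro p
    set T : Finset (Vtx n) := Finset.univ.biUnion
      (fun i : Fin n => {Function.update p i (p i + 1), Function.update p i (p i - 1)}) with hT
    have hTcard : T.card ≤ 2*n := by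
      refine le_trans (Finset.card_biUnion_le) ?_
      refine le_trans (Finset.sum_le_sum (fun i _ => Finset.card_insert_le _ _)) ?_
      simp [mul_comm]
    have hmapsto : ∀ e ∈ {e ∈ edgesS M x r | e.1 = p}, Prod.snd e ∈ (↑T : Set (Vtx n)) := by
      rintro ⟨a, b⟩ ⟨⟨hadj, -⟩, rfl⟩
      obtain ⟨i, hi⟩ := zadj_structure hadj
      refine Finset.mem_coe.mpr (Finset.mem_biUnion.mpr ⟨i, Finset.mem_univ i, ?_⟩)
      simp only [Finset.mem_insert, Finset.mem_singleton]
      exact hi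
    have hinj : Set.InjOn Prod.snd {e ∈ edgesS M x r | e.1 = p} := by
      rintro ⟨a, b⟩ ⟨-, ha⟩ ⟨a', b'⟩ ⟨-, ha'⟩ h
      simp only at ha ha' h
      subst ha; subst ha'; subst h; rfl
    have := Set.ncard_le_ncard_of_injOn Prod.snd hmapsto hinj (T.finite_toSet)
    rw [Set.ncard_coe_finset] at this
    exact le_trans this hTcard

/-- counting points of the ball by their chosen boundary edge -/
lemma ball_card_le {n : ℕ} {M : Set (Vtx n)} (x : Vtx n) (k : ℕ)
    (hns : ∀ p ∈ M ∩ Bhat x k, p ∉ skel M) :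
    (M ∩ Bhat x k).ncard ≤ 2^n * (edgesA M x (k+1)).ncard := by
  classical
  have hex : ∀ p : Vtx n, ∃ e : Vtx n × Vtx n, p ∈ M ∩ Bhat x k →
      ZAdj e.1 e.2 ∧ e.1 ∈ M ∧ e.2 ∉ M ∧ ∀ i, e.1 i = p i ∨ e.1 i = p i + 1 := by
    intro p
    by_cases hp : p ∈ M ∩ Bhat x k
    · obtain ⟨a, b, h1, h2, h3, h4⟩ := edge_of_not_skel hp.1 (hns p hp)
      exact ⟨(a, b), fun _ => ⟨h1, h2, h3, h4⟩⟩
    · exact ⟨(x, x), fun h => absurd h hp⟩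
  choose f hf using hex
  have hAfin : (edgesA M x (k+1)).Finite := by
    have hsub : edgesA M x (k+1) ⊆ (Bhat x (k+1)) ×ˢ (Bhat x (k+2)) := by
      rintro ⟨a, b⟩ ⟨hadj, -, haB, -⟩
      exact ⟨haB, zadj_bhat haB hadj⟩
    exact Set.Finite.subset (Set.Finite.prod (bhat_finite _ _) (bhat_finite _ _)) hsub
  refine ncard_le_mul_of_fibers _ _ f (2^n)
    ((bhat_finite x k).subset (Set.inter_subset_right)) hAfin ?_ ?_
  · intro p hp
    obtain ⟨h1, h2, h3, h4⟩ := hf p hp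
    refine ⟨h1, h2, ?_, h3⟩
    intro i
    have := hp.2 i
    rcases h4 i with h | h <;> omega
  · intro e
    set T : Finset (Vtx n) := Fintype.piFinset (fun i => ({e.1 i, e.1 i - 1} : Finset ℤ)) with hT
    have hTcard : T.card ≤ 2^n := by
      rw [hT, Fintype.card_piFinset]
      calc ∏ i : Fin n, ({e.1 i, e.1 i - 1} : Finset ℤ).card
          ≤ ∏ _i : Fin n, 2 := Finset.prod_le_prod' (fun i _ => Finset.card_insert_le _ _)
        _ = 2^n := by simp
    have hmapsto : ∀ p ∈ {p ∈ M ∩ Bhat x k | f p = e}, p ∈ (↑T : Set (Vtx n)) := by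
      intro p ⟨hp, hpe⟩
      obtain ⟨-, -, -, h4⟩ := hf p hp
      rw [hpe] at h4
      simp only [hT, Finset.coe_sort_coe, Finset.mem_coe, Fintype.mem_piFinset,
        Finset.mem_insert, Finset.mem_singleton]
      intro i
      rcases h4 i with h | h
      · left; omega
      · right; omega
    have := Set.ncard_le_ncard_of_injOn id hmapsto (Set.injOn_id _) (T.finite_toSet)
    rw [Set.ncard_coe_finset] at this
    exact le_trans this hTcard

lemma two_mul_pow_le {K : ℕ} (hK : 1 ≤ K) : 2 * K^K ≤ (K+1)^K := by
  have hK0 : (K : ℚ) ≠ 0 := by positivity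
  have hb : (1 : ℚ) + (K : ℚ) * (1/K) ≤ (1 + 1/K)^K :=
    one_add_mul_le_pow (by
      have : (0:ℚ) ≤ 1/K := by positivity
      linarith) K
  have hb2 : (2 : ℚ) ≤ (1 + 1/K)^K := by
    rw [mul_one_div, div_self hK0] at hb
    linarith
  have hmul : (2 : ℚ) * K^K ≤ ((K : ℚ)+1)^K := by
    have h1 : ((1 : ℚ) + 1/K)^K * (K : ℚ)^K = ((K : ℚ)+1)^K := by
      rw [← mul_pow]
      congr 1
      field_simp
    calc (2 : ℚ) * K^K ≤ (1 + 1/K)^K * K^K := by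
          apply mul_le_mul_of_nonneg_right hb2 (by positivity)
      _ = ((K : ℚ)+1)^K := h1
  exact_mod_cast hmul

lemma exp_beats_poly (C n : ℕ) : ∃ t : ℕ, C * (t+1)^n < 2^t := by
  obtain ⟨s, hs⟩ : ∃ s, s = C * (n+1)^n := ⟨_, rfl⟩
  refine ⟨(n+1) * s, ?_⟩
  calc C * ((n+1)*s+1)^n ≤ C * ((n+1)*(s+1))^n := by
        gcongr
        have : (n+1)*(s+1) = (n+1)*s + (n+1) := by ring
        omega
    _ = C * (n+1)^n * (s+1)^n := by rw [mul_pow, ← mul_assoc]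
    _ < (s+1) * (s+1)^n := by
        have : C * (n+1)^n < s + 1 := by omega
        exact Nat.mul_lt_mul_of_lt_of_le this (le_refl _) (by positivity)
    _ = (s+1)^(n+1) := by ring
    _ ≤ (2^s)^(n+1) := Nat.pow_le_pow_left (Nat.lt_two_pow_self (n := s)) (n+1)
    _ = 2^((n+1)*s) := by rw [← pow_mul, mul_comm]

lemma numeric_lemma (n K : ℕ) (hK : 1 ≤ K) : ∃ m : ℕ, K^m * (4*m+1)^n < (K+1)^m := by
  obtain ⟨t, ht⟩ := exp_beats_poly ((4*K)^n) n
  refine ⟨K * t, ?_⟩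
  calc K^(K*t) * (4*(K*t)+1)^n ≤ K^(K*t) * ((4*K)*(t+1))^n := by
        gcongr
        have : (4*K)*(t+1) = 4*(K*t) + 4*K := by ring
        omega
    _ = K^(K*t) * ((4*K)^n * (t+1)^n) := by rw [mul_pow]
    _ < K^(K*t) * 2^t := by
        have hKpos : 0 < K^(K*t) := Nat.pow_pos (by omega)
        exact Nat.mul_lt_mul_of_le_of_lt (le_refl _) ht hKpos
    _ = (2 * K^K)^t := by rw [mul_pow, ← pow_mul]; ring
    _ ≤ ((K+1)^K)^t := Nat.pow_le_pow_left (two_mul_pow_le hK) t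
    _ = (K+1)^(K*t) := by rw [← pow_mul]

lemma latDist_le_of_bhat {n : ℕ} {x y : Vtx n} {r : ℕ} (h : y ∈ Bhat x r) :
    latDist x y ≤ n * r := by
  rw [latDist]
  calc ∑ i, (x i - y i).natAbs ≤ ∑ _i : Fin n, r :=
        Finset.sum_le_sum (fun i _ => by have := h i; omega)
    _ = n * r := by simp [mul_comm]

/-- main density claim -/
lemma dense_aux {n : ℕ} (hn : 1 ≤ n) {M : Set (Vtx n)} (hmin : IsMinimal M)
    {m : ℕ} (hm : (2^n*(2*n))^m * (4*m+1)^n < (2^n*(2*n)+1)^m)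
    {x : Vtx n} (hx : x ∈ M) :
    ∃ y ∈ skel M, latDist x y ≤ n * (2*m) := by
  classical
  by_contra hcon
  push_neg at hcon
  set K := 2^n*(2*n) with hK
  -- no skeleton point in the ball of radius 2m
  have hns : ∀ k : ℕ, k ≤ 2*m → ∀ p ∈ M ∩ Bhat x k, p ∉ skel M := by
    intro k hk p hp hskel
    have hpb : p ∈ Bhat x (2*m) := bhat_mono x hk hp.2
    exact absurd (latDist_le_of_bhat hpb) (Nat.not_le.mpr (hcon p hskel))
  set V : ℕ → ℕ := fun r => (M ∩ Bhat x r).ncard with hV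
  have hfin : ∀ r, (M ∩ Bhat x r).Finite := fun r =>
    (bhat_finite x r).subset Set.inter_subset_right
  have hVmono : ∀ r s : ℕ, r ≤ s → V r ≤ V s := by
    intro r s hrs
    exact Set.ncard_le_ncard (Set.inter_subset_inter_right M (bhat_mono x hrs)) (hfin s)
  have hrec : ∀ k : ℕ, k ≤ 2*m → K * V (k+1) + V k ≤ K * V (k+2) := by
    intro k hk
    have h1 : V k ≤ 2^n * (edgesA M x (k+1)).ncard := ball_card_le x k (hns k hk)
    have h2 : (edgesA M x (k+1)).ncard ≤ (edgesS M x (k+1)).ncard := key_ineq hmin x (k+1)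
    have h3 : (edgesS M x (k+1)).ncard
        ≤ 2*n * ((M ∩ Bhat x (k+2)) \ (M ∩ Bhat x (k+1))).ncard := edgesS_card_le M x (k+1)
    have h4 : ((M ∩ Bhat x (k+2)) \ (M ∩ Bhat x (k+1))).ncard = V (k+2) - V (k+1) :=
      Set.ncard_diff (Set.inter_subset_inter_right M (bhat_mono x (by omega))) (hfin (k+1))
    have h5 : V (k+1) ≤ V (k+2) := hVmono _ _ (by omega)
    have h6 : V k ≤ 2^n * (2*n * (V (k+2) - V (k+1))) := by
      refine le_trans h1 ?_
      refine Nat.mul_le_mul_left _ ?_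
      rw [← h4]
      exact le_trans h2 h3
    have h7 : 2^n * (2*n * (V (k+2) - V (k+1))) = K * (V (k+2) - V (k+1)) := by
      rw [hK]; ring
    rw [h7] at h6
    have hKpos : 1 ≤ K := by
      rw [hK]
      have : 1 ≤ 2^n := Nat.one_le_two_pow
      nlinarith
    -- K * V(k+2) = K * V(k+1) + K * (V(k+2) - V(k+1)) ≥ K * V(k+1) + V k
    have h8 : K * V (k+2) = K * V (k+1) + K * (V (k+2) - V (k+1)) := by
      have h9 : V (k+1) + (V (k+2) - V (k+1)) = V (k+2) := by omega
      calc K * V (k+2) = K * (V (k+1) + (V (k+2) - V (k+1))) := by rw [h9]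
        _ = K * V (k+1) + K * (V (k+2) - V (k+1)) := by ring
    omega
  have hV0 : 1 ≤ V 0 := by
    have hx0 : x ∈ M ∩ Bhat x 0 := ⟨hx, fun i => by omega⟩
    exact (Set.ncard_pos (hfin 0)).mpr ⟨x, hx0⟩
  have hgrow : ∀ j : ℕ, j ≤ m → (K+1)^j ≤ K^j * V (2*j) := by
    intro j
    induction j with
    | zero => intro _; simpa using hV0
    | succ j ih =>
      intro hj
      have IH := ih (by omega)
      have hk2 : 2*j ≤ 2*m := by omega
      have hr := hrec (2*j) hk2
      have hmono := hVmono (2*j) (2*j+1) (by omega)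
      calc (K+1)^(j+1) = (K+1)^j * K + (K+1)^j := by ring
        _ ≤ K^j * V (2*j) * K + K^j * V (2*j) :=
            Nat.add_le_add (Nat.mul_le_mul_right K IH) IH
        _ = K^j * (K * V (2*j) + V (2*j)) := by ring
        _ ≤ K^j * (K * V (2*j+2)) := by
            refine Nat.mul_le_mul_left _ ?_
            have h1 : K * V (2*j) ≤ K * V (2*j+1) := Nat.mul_le_mul_left K hmono
            have h2 : V (2*j) ≤ V (2*j+1) := hmono
            omega
        _ = K^(j+1) * V (2*(j+1)) := by ring_nf
  have hfinal := hgrow m (le_refl m)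
  have hball : V (2*m) ≤ (4*m+1)^n := by
    have h1 : V (2*m) ≤ (Bhat x (2*m)).ncard :=
      Set.ncard_le_ncard Set.inter_subset_right (bhat_finite x (2*m))
    have h2 := bhat_ncard_le x (2*m)
    have h3 : 2*(2*m)+1 = 4*m+1 := by omega
    rw [h3] at h2
    omega
  have : (K+1)^m ≤ K^m * (4*m+1)^n :=
    le_trans hfinal (Nat.mul_le_mul_left _ hball)
  exact absurd hm (Nat.not_lt.mpr this)

/-- for any minimal subgraph `M ⊆ ℤⁿ`, the `n`-skeleton `Mⁿ` is nonempty, and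
there is a constant `c₁` depending only on `n` with `d(x, Mⁿ) ≤ c₁` for every `x ∈ M`. -/
theorem skel_nonempty_and_dense (n : ℕ) :
    ∃ c₁ : ℕ, ∀ M : Set (Vtx n), IsMinimal M → M.Nonempty → M ≠ Set.univ →
      (skel M).Nonempty ∧ ∀ x ∈ M, ∃ y ∈ skel M, latDist x y ≤ c₁ := by
  rcases Nat.eq_zero_or_pos n with hn | hn
  · subst hn
    refine ⟨0, fun M _ hne hMuniv => absurd ?_ hMuniv⟩
    obtain ⟨x, hx⟩ := hne
    refine Set.eq_univ_of_forall fun y => ?_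
    have hyx : y = x := funext fun i => i.elim0
    rwa [hyx]
  · have hK : 1 ≤ 2^n*(2*n) := by
      have h1 : 1 ≤ 2^n := Nat.one_le_two_pow
      nlinarith
    obtain ⟨m, hm⟩ := numeric_lemma n (2^n*(2*n)) hK
    refine ⟨n*(2*m), fun M hmin hne _ => ?_⟩
    have hdense : ∀ x ∈ M, ∃ y ∈ skel M, latDist x y ≤ n*(2*m) :=
      fun x hx => dense_aux hn hmin hm hx
    obtain ⟨x, hx⟩ := hne
    obtain ⟨y, hy, -⟩ := hdense x hx
    exact ⟨⟨y, hy⟩, hdense⟩
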